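/- arXiv:2210.08969 — 7 statements merged into one kernel-verified Lean document; each statement's English description precedes it below -/
import Mathlib

section
/- Let n ≥ 2 be an integer, c > 0, and r, σ real numbers with 1 < r < n and 0 < σ < (r−1)c. For δ ∈ (0,1) define the OD-TFT one-shot deviation payoffs: π0C = (r−1)c, π0D(δ) = (1−δ)·((n−1)rc/n + δ²σ) + δ³(r−1)c, π0O(δ) = (1−δ)σ + δ(r−1)c, π1C(δ) = (1−δ)·((rc/n − c) + δσ) + δ²(r−1)c, π1D(δ) = (1−δ)δσ + δ²(r−1)c, π1O(δ) = (1−δ)(1+δ²)σ + δ³(r−1)c. If r > (σ+3c)n/((2n+1)c), then there exists δ₀ ∈ (0,1) such that for all δ ∈ (δ₀,1): π0C ≥ π0D(δ), π0C ≥ π0O(δ), π1D(δ) ≥ π1C(δ), and π1D(δ) ≥ π1O(δ). Conversely, if r < (σ+3c)n/((2n+1)c), then there exists δ₀ ∈ (0,1) such that for all δ ∈ (δ₀,1): π0C < π0D(δ). -/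
/-!
Each one-shot deviation changes the deviator's payoff by `(1 - δ) * G δ` for a polynomial `G`,
so for `δ` close to 1 its sign is that of `G 1`. Opting out in State 0 loses
`G = (r - 1) c - σ > 0`, cooperating in State 1 loses `G = c - r c / n > 0`, and opting out in
State 1 loses `G 1 = (r - 1) c - σ > 0`. Only defecting in State 0 depends on the threshold
`θ = (σ + 3 c) n / ((2 n + 1) c)`: there `G 1 = 3 (r - 1) c - ((n - 1) r c / n + σ)`, which
equals `(2 n + 1) c / n * (r - θ)`.
-/

open Filter Topology Set

theorem exists_Ioo_forall_of_eventually_nhdsLT {α : Type*} [LinearOrder α] [TopologicalSpace α]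
    [OrderTopology α] [DenselyOrdered α] {a b : α} (hab : a < b) {p : α → Prop}
    (h : ∀ᶠ x in 𝓝[<] b, p x) : ∃ x₀ ∈ Ioo a b, ∀ x ∈ Ioo x₀ b, p x := by
  obtain ⟨m, ham, hmb⟩ := exists_between hab
  obtain ⟨x₀, hx₀, hsub⟩ := (mem_nhdsLT_iff_exists_mem_Ico_Ioo_subset hmb).1 h
  exact ⟨x₀, ⟨ham.trans_le hx₀.1, hx₀.2⟩, hsub⟩

theorem eventually_nhdsLT_sub_mul_pos {G : ℝ → ℝ} {b : ℝ} (hG : ContinuousAt G b)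
    (hb : 0 < G b) : ∀ᶠ x in 𝓝[<] b, 0 < (b - x) * G x := by
  filter_upwards [self_mem_nhdsWithin, nhdsWithin_le_nhds (hG.eventually (lt_mem_nhds hb))]
    with x hxb hGx
  exact mul_pos (sub_pos.2 hxb) hGx

noncomputable section

namespace ODTFT

/-! Payoffs `π_{s X}` in State `s` of a player who plays `X` once and then returns to OD-TFT. -/

def payoff0C (c r : ℝ) : ℝ := (r - 1) * c

def payoff0D (n c r σ δ : ℝ) : ℝ :=
  (1 - δ) * ((n - 1) * r * c / n + δ ^ 2 * σ) + δ ^ 3 * (r - 1) * c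

def payoff0O (c r σ δ : ℝ) : ℝ := (1 - δ) * σ + δ * (r - 1) * c

def payoff1C (n c r σ δ : ℝ) : ℝ := (1 - δ) * ((r * c / n - c) + δ * σ) + δ ^ 2 * (r - 1) * c

def payoff1D (c r σ δ : ℝ) : ℝ := (1 - δ) * δ * σ + δ ^ 2 * (r - 1) * c

def payoff1O (c r σ δ : ℝ) : ℝ := (1 - δ) * (1 + δ ^ 2) * σ + δ ^ 3 * (r - 1) * c

variable {n c r σ : ℝ}

theorem payoff0C_sub_payoff0D (δ : ℝ) :
    payoff0C c r - payoff0D n c r σ δ =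
      (1 - δ) * ((1 + δ + δ ^ 2) * ((r - 1) * c) - ((n - 1) * r * c / n + δ ^ 2 * σ)) := by
  unfold payoff0C payoff0D; ring

theorem payoff0C_sub_payoff0O (δ : ℝ) :
    payoff0C c r - payoff0O c r σ δ = (1 - δ) * ((r - 1) * c - σ) := by
  unfold payoff0C payoff0O; ring

theorem payoff1D_sub_payoff1C (δ : ℝ) :
    payoff1D c r σ δ - payoff1C n c r σ δ = (1 - δ) * (c - r * c / n) := by
  unfold payoff1D payoff1C; ring

theorem payoff1D_sub_payoff1O (δ : ℝ) :
    payoff1D c r σ δ - payoff1O c r σ δ =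
      (1 - δ) * (δ ^ 2 * ((r - 1) * c) - (1 - δ + δ ^ 2) * σ) := by
  unfold payoff1D payoff1O; ring

theorem defection_gain_at_one_eq (hn : 0 < n) (hc : 0 < c) :
    3 * ((r - 1) * c) - ((n - 1) * r * c / n + σ) =
      (2 * n + 1) * c / n * (r - (σ + 3 * c) * n / ((2 * n + 1) * c)) := by
  field_simp
  ring

theorem eventually_payoff0D_le (hn : 0 < n) (hc : 0 < c)
    (hr : (σ + 3 * c) * n / ((2 * n + 1) * c) < r) :
    ∀ᶠ δ in 𝓝[<] 1, payoff0D n c r σ δ ≤ payoff0C c r := by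
  have hG : ContinuousAt
      (fun δ : ℝ => (1 + δ + δ ^ 2) * ((r - 1) * c) - ((n - 1) * r * c / n + δ ^ 2 * σ)) 1 := by
    fun_prop
  have hG1 : 0 < 3 * ((r - 1) * c) - ((n - 1) * r * c / n + σ) := by
    rw [defection_gain_at_one_eq hn hc]
    exact mul_pos (by positivity) (sub_pos.2 hr)
  filter_upwards [eventually_nhdsLT_sub_mul_pos hG (by norm_num; linarith)] with δ hδ
  rw [← sub_nonneg, payoff0C_sub_payoff0D]
  exact hδ.le

theorem eventually_payoff0C_lt_payoff0D (hn : 0 < n) (hc : 0 < c)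
    (hr : r < (σ + 3 * c) * n / ((2 * n + 1) * c)) :
    ∀ᶠ δ in 𝓝[<] 1, payoff0C c r < payoff0D n c r σ δ := by
  have hG : ContinuousAt
      (fun δ : ℝ => (n - 1) * r * c / n + δ ^ 2 * σ - (1 + δ + δ ^ 2) * ((r - 1) * c)) 1 := by
    fun_prop
  have hG1 : 0 < (n - 1) * r * c / n + σ - 3 * ((r - 1) * c) := by
    rw [← neg_sub, defection_gain_at_one_eq hn hc, neg_pos]
    exact mul_neg_of_pos_of_neg (by positivity) (sub_neg.2 hr)
  filter_upwards [eventually_nhdsLT_sub_mul_pos hG (by norm_num; linarith)] with δ hδ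
  rw [← sub_neg, payoff0C_sub_payoff0D]
  linarith

theorem eventually_payoff0O_le (hσ : σ < (r - 1) * c) :
    ∀ᶠ δ in 𝓝[<] 1, payoff0O c r σ δ ≤ payoff0C c r := by
  filter_upwards [eventually_nhdsLT_sub_mul_pos continuousAt_const (sub_pos.2 hσ)] with δ hδ
  rw [← sub_nonneg, payoff0C_sub_payoff0O]
  exact hδ.le

theorem eventually_payoff1C_le (hn : 0 < n) (hc : 0 < c) (hrn : r < n) :
    ∀ᶠ δ in 𝓝[<] 1, payoff1C n c r σ δ ≤ payoff1D c r σ δ := by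
  have hgain : 0 < c - r * c / n := by
    rw [sub_pos, div_lt_iff₀ hn, mul_comm r c]
    exact mul_lt_mul_of_pos_left hrn hc
  filter_upwards [eventually_nhdsLT_sub_mul_pos continuousAt_const hgain] with δ hδ
  rw [← sub_nonneg, payoff1D_sub_payoff1C]
  exact hδ.le

theorem eventually_payoff1O_le (hσ : σ < (r - 1) * c) :
    ∀ᶠ δ in 𝓝[<] 1, payoff1O c r σ δ ≤ payoff1D c r σ δ := by
  have hG : ContinuousAt (fun δ : ℝ => δ ^ 2 * ((r - 1) * c) - (1 - δ + δ ^ 2) * σ) 1 := by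
    fun_prop
  filter_upwards [eventually_nhdsLT_sub_mul_pos hG (by norm_num; linarith)] with δ hδ
  rw [← sub_nonneg, payoff1D_sub_payoff1O]
  exact hδ.le

end ODTFT

end

open ODTFT in
theorem ODTFT_one_shot_deviation_general (n : ℕ) (c r σ : ℝ)
    (hc : 0 < c) (hr1 : 1 < r) (hrn : r < (n : ℝ))
    (hσ : σ < (r - 1) * c) :
    (r > (σ + 3 * c) * n / ((2 * n + 1) * c) →
      ∃ δ₀ ∈ Set.Ioo (0 : ℝ) 1, ∀ δ ∈ Set.Ioo δ₀ 1,
        (r - 1) * c ≥ (1 - δ) * (((n : ℝ) - 1) * r * c / n + δ ^ 2 * σ)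
            + δ ^ 3 * (r - 1) * c ∧
        (r - 1) * c ≥ (1 - δ) * σ + δ * (r - 1) * c ∧
        (1 - δ) * δ * σ + δ ^ 2 * (r - 1) * c ≥
          (1 - δ) * ((r * c / n - c) + δ * σ) + δ ^ 2 * (r - 1) * c ∧
        (1 - δ) * δ * σ + δ ^ 2 * (r - 1) * c ≥
          (1 - δ) * (1 + δ ^ 2) * σ + δ ^ 3 * (r - 1) * c) ∧
    (r < (σ + 3 * c) * n / ((2 * n + 1) * c) →
      ∃ δ₀ ∈ Set.Ioo (0 : ℝ) 1, ∀ δ ∈ Set.Ioo δ₀ 1,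
        (r - 1) * c < (1 - δ) * (((n : ℝ) - 1) * r * c / n + δ ^ 2 * σ)
            + δ ^ 3 * (r - 1) * c) := by
  have hn : (0 : ℝ) < n := by linarith
  refine ⟨fun hr => ?_, fun hr => ?_⟩
  · exact exists_Ioo_forall_of_eventually_nhdsLT zero_lt_one <|
      (eventually_payoff0D_le hn hc hr).and <| (eventually_payoff0O_le hσ).and <|
        (eventually_payoff1C_le hn hc hrn).and (eventually_payoff1O_le hσ)
  · exact exists_Ioo_forall_of_eventually_nhdsLT zero_lt_one
      (eventually_payoff0C_lt_payoff0D hn hc hr)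

/-- One-shot deviation conditions for OD-TFT in the repeated optional public
goods game: for `δ` close enough to 1, no one-shot deviation is profitable
when `r > (σ+3c)n/((2n+1)c)`, and deviating to defection in State 0 is
profitable when `r < (σ+3c)n/((2n+1)c)`. -/
theorem ODTFT_one_shot_deviation (n : ℕ) (hn : 2 ≤ n) (c r σ : ℝ)
    (hc : 0 < c) (hr1 : 1 < r) (hrn : r < (n : ℝ))
    (hσ0 : 0 < σ) (hσ : σ < (r - 1) * c) :
    (r > (σ + 3 * c) * n / ((2 * n + 1) * c) →
      ∃ δ₀ ∈ Set.Ioo (0 : ℝ) 1, ∀ δ ∈ Set.Ioo δ₀ 1,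
        (r - 1) * c ≥ (1 - δ) * (((n : ℝ) - 1) * r * c / n + δ ^ 2 * σ)
            + δ ^ 3 * (r - 1) * c ∧
        (r - 1) * c ≥ (1 - δ) * σ + δ * (r - 1) * c ∧
        (1 - δ) * δ * σ + δ ^ 2 * (r - 1) * c ≥
          (1 - δ) * ((r * c / n - c) + δ * σ) + δ ^ 2 * (r - 1) * c ∧
        (1 - δ) * δ * σ + δ ^ 2 * (r - 1) * c ≥
          (1 - δ) * (1 + δ ^ 2) * σ + δ ^ 3 * (r - 1) * c) ∧
    (r < (σ + 3 * c) * n / ((2 * n + 1) * c) →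
      ∃ δ₀ ∈ Set.Ioo (0 : ℝ) 1, ∀ δ ∈ Set.Ioo δ₀ 1,
        (r - 1) * c < (1 - δ) * (((n : ℝ) - 1) * r * c / n + δ ^ 2 * σ)
            + δ ^ 3 * (r - 1) * c) :=
  ODTFT_one_shot_deviation_general n c r σ hc hr1 hrn hσ
end

section
/- Let n ≥ 2 be an integer, c > 0, and r, σ real numbers with 1 < r < n and 0 < σ < (r−1)c. For δ ∈ (0,1) define the DO-OFT one-shot deviation payoffs: π0C = (r−1)c, π0D(δ) = (1−δ)·((n−1)rc/n + δσ) + δ³(r−1)c, π0O(δ) = (1−δ)σ + δ(r−1)c, π1C(δ) = (1−δ)(rc/n − c) + δ(r−1)c, π1D(δ) = δ(r−1)c, π1O(δ) = (1−δ)σ + δ²(r−1)c. If r > (σ+3c)n/((2n+1)c), then there exists δ₀ ∈ (0,1) such that for all δ ∈ (δ₀,1): π0C ≥ π0D(δ), π0C ≥ π0O(δ), π1D(δ) ≥ π1C(δ), and π1D(δ) ≥ π1O(δ). Conversely, if r < (σ+3c)n/((2n+1)c), then there exists δ₀ ∈ (0,1) such that for all δ ∈ (δ₀,1): π0C < π0D(δ).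 -/
set_option maxHeartbeats 1600000 in
/-- One-shot deviation conditions for DO-OFT in the repeated optional public
goods game: for `δ` close enough to 1, no one-shot deviation is profitable
when `r > (σ+3c)n/((2n+1)c)`, and deviating to defection in State 0 is
profitable when `r < (σ+3c)n/((2n+1)c)`. -/
theorem DOOFT_one_shot_deviation (n : ℕ) (hn : 2 ≤ n) (c r σ : ℝ)
    (hc : 0 < c) (hr1 : 1 < r) (hrn : r < (n : ℝ))
    (hσ0 : 0 < σ) (hσ : σ < (r - 1) * c) :
    (r > (σ + 3 * c) * n / ((2 * n + 1) * c) →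
      ∃ δ₀ ∈ Set.Ioo (0 : ℝ) 1, ∀ δ ∈ Set.Ioo δ₀ 1,
        (r - 1) * c ≥ (1 - δ) * (((n : ℝ) - 1) * r * c / n + δ * σ)
            + δ ^ 3 * (r - 1) * c ∧
        (r - 1) * c ≥ (1 - δ) * σ + δ * (r - 1) * c ∧
        δ * (r - 1) * c ≥ (1 - δ) * (r * c / n - c) + δ * (r - 1) * c ∧
        δ * (r - 1) * c ≥ (1 - δ) * σ + δ ^ 2 * (r - 1) * c) ∧
    (r < (σ + 3 * c) * n / ((2 * n + 1) * c) →
      ∃ δ₀ ∈ Set.Ioo (0 : ℝ) 1, ∀ δ ∈ Set.Ioo δ₀ 1,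
        (r - 1) * c < (1 - δ) * (((n : ℝ) - 1) * r * c / n + δ * σ)
            + δ ^ 3 * (r - 1) * c) := by
  have hn2 : (2 : ℝ) ≤ (n : ℝ) := by exact_mod_cast hn
  have hn0 : (0 : ℝ) < n := by linarith
  have hA : 0 < (r - 1) * c := mul_pos (by linarith) hc
  -- abbreviate the fraction
  have hq : (((n : ℝ) - 1) * r * c / n) * n = ((n : ℝ) - 1) * r * c := by
    field_simp
  set q : ℝ := ((n : ℝ) - 1) * r * c / n with hqdef
  have hq0 : 0 < q := by
    rw [hqdef]; exact div_pos (by nlinarith) hn0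
  constructor
  · intro hgt
    have h1 : (σ + 3 * c) * n < r * ((2 * n + 1) * c) := by
      rw [gt_iff_lt, div_lt_iff₀ (by positivity)] at hgt
      linarith
    -- 3(r-1)c > q + σ
    have hK : q + σ < 3 * ((r - 1) * c) := by nlinarith
    refine ⟨max ((q + σ) / (3 * ((r - 1) * c))) (σ / ((r - 1) * c)), ⟨?_, ?_⟩, ?_⟩
    · exact lt_max_of_lt_right (div_pos hσ0 hA)
    · apply max_lt
      · rw [div_lt_one (by positivity)]; linarith
      · rw [div_lt_one hA]; linarith
    · rintro δ ⟨hδl, hδ1⟩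
      have hδ0 : 0 < δ := lt_trans (lt_max_of_lt_right (div_pos hσ0 hA)) hδl
      have h2 : q + σ < δ * (3 * ((r - 1) * c)) := by
        have := lt_of_le_of_lt (le_max_left _ _) hδl
        rwa [div_lt_iff₀ (by positivity)] at this
      have h3 : σ < δ * ((r - 1) * c) := by
        have := lt_of_le_of_lt (le_max_right _ _) hδl
        rwa [div_lt_iff₀ hA] at this
      have h1δ : 0 < 1 - δ := by linarith
      refine ⟨?_, ?_, ?_, ?_⟩
      · have key : q + δ * σ ≤ (1 + δ + δ ^ 2) * ((r - 1) * c) := by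
          nlinarith [mul_nonneg (sq_nonneg (δ - 1)) hA.le,
            mul_nonneg h1δ.le hσ0.le]
        have := mul_le_mul_of_nonneg_left key h1δ.le
        nlinarith [this]
      · nlinarith
      · have hrc : r * c / n ≤ c := by
          rw [div_le_iff₀ hn0]; nlinarith
        nlinarith
      · nlinarith
  · intro hlt
    have h1 : r * ((2 * n + 1) * c) < (σ + 3 * c) * n := by
      rw [lt_div_iff₀ (by positivity)] at hlt
      linarith
    have hK : 3 * ((r - 1) * c) < q + σ := by nlinarith
    refine ⟨max (1 / 2) (1 - (q + σ - 3 * ((r - 1) * c)) / σ), ⟨?_, ?_⟩, ?_⟩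
    · exact lt_max_of_lt_left (by norm_num)
    · apply max_lt
      · norm_num
      · have : 0 < (q + σ - 3 * ((r - 1) * c)) / σ := div_pos (by linarith) hσ0
        linarith
    · rintro δ ⟨hδl, hδ1⟩
      have h2 : 1 - (q + σ - 3 * ((r - 1) * c)) / σ < δ :=
        lt_of_le_of_lt (le_max_right _ _) hδl
      have h3 : (1 / 2 : ℝ) < δ := lt_of_le_of_lt (le_max_left _ _) hδl
      have h1δ : 0 < 1 - δ := by linarith
      have h4 : (1 - δ) * σ < q + σ - 3 * ((r - 1) * c) := by
        have : (1 - δ) < (q + σ - 3 * ((r - 1) * c)) / σ := by linarith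
        rwa [lt_div_iff₀ hσ0] at this
      have key : (1 + δ + δ ^ 2) * ((r - 1) * c) < q + δ * σ := by
        nlinarith [mul_nonneg (mul_nonneg h1δ.le
          (by linarith : (0 : ℝ) ≤ 2 + δ)) hA.le]
      have := mul_lt_mul_of_pos_left key h1δ
      nlinarith [this]
end

section
/- Let n ≥ 2 be an integer, c > 0, and r, σ real numbers with 1 < r < n and 0 < σ < (r−1)c. For δ ∈ (0,1) define the AoN one-shot deviation payoffs: π0C = (r−1)c, π0D(δ) = (1−δ)·(n−1)rc/n + δ²(r−1)c, π0O(δ) = (1−δ)σ + δ(r−1)c, π1C(δ) = (1−δ)(rc/n − c) + δ(r−1)c, π1D(δ) = δ(r−1)c, π1O(δ) = (1−δ)σ + δ²(r−1)c. If r > 2n/(n+1), then there exists δ₀ ∈ (0,1) such that for all δ ∈ (δ₀,1): π0C ≥ π0D(δ), π0C ≥ π0O(δ), π1D(δ) ≥ π1C(δ), and π1D(δ) ≥ π1O(δ). Conversely, if r < 2n/(n+1), then there exists δ₀ ∈ (0,1) such that for all δ ∈ (δ₀,1): π0C < π0D(δ). -/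
set_option maxHeartbeats 1000000


/-- One-shot deviation conditions for the all-or-none strategy AoN in the
repeated (optional) public goods game: for `δ` close enough to 1, no one-shot
deviation is profitable when `r > 2n/(n+1)`, and deviating to defection in
State 0 is profitable when `r < 2n/(n+1)`. -/
theorem AoN_one_shot_deviation (n : ℕ) (hn : 2 ≤ n) (c r σ : ℝ)
    (hc : 0 < c) (hr1 : 1 < r) (hrn : r < (n : ℝ))
    (hσ0 : 0 < σ) (hσ : σ < (r - 1) * c) :
    (r > 2 * n / ((n : ℝ) + 1) →
      ∃ δ₀ ∈ Set.Ioo (0 : ℝ) 1, ∀ δ ∈ Set.Ioo δ₀ 1,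
        (r - 1) * c ≥ (1 - δ) * (((n : ℝ) - 1) * r * c / n)
            + δ ^ 2 * (r - 1) * c ∧
        (r - 1) * c ≥ (1 - δ) * σ + δ * (r - 1) * c ∧
        δ * (r - 1) * c ≥ (1 - δ) * (r * c / n - c) + δ * (r - 1) * c ∧
        δ * (r - 1) * c ≥ (1 - δ) * σ + δ ^ 2 * (r - 1) * c) ∧
    (r < 2 * n / ((n : ℝ) + 1) →
      ∃ δ₀ ∈ Set.Ioo (0 : ℝ) 1, ∀ δ ∈ Set.Ioo δ₀ 1,
        (r - 1) * c < (1 - δ) * (((n : ℝ) - 1) * r * c / n)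
            + δ ^ 2 * (r - 1) * c) := by
  have hN : (2 : ℝ) ≤ (n : ℝ) := by exact_mod_cast hn
  have hN0 : (0 : ℝ) < (n : ℝ) := by linarith
  have hN1 : (0 : ℝ) < (n : ℝ) + 1 := by linarith
  have hr0 : (0 : ℝ) < r - 1 := by linarith
  have hA : (0 : ℝ) < (r - 1) * c := mul_pos hr0 hc
  constructor
  · intro hgt
    have hgt' : 2 * (n : ℝ) < r * ((n : ℝ) + 1) := by
      rw [gt_iff_lt, div_lt_iff₀ hN1] at hgt
      linarith
    set t : ℝ := ((n : ℝ) - 1) * r / ((n : ℝ) * (r - 1)) - 1 with ht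
    set s : ℝ := σ / ((r - 1) * c) with hs
    clear_value t s
    have hs0 : 0 < s := by rw [hs]; exact div_pos hσ0 hA
    have hs1 : s < 1 := by rw [hs]; exact (div_lt_one hA).mpr hσ
    have hden : 0 < (n : ℝ) * (r - 1) := mul_pos hN0 hr0
    have ht1 : t < 1 := by
      rw [ht, sub_lt_iff_lt_add, div_lt_iff₀ hden]
      nlinarith
    refine ⟨max t s, ⟨lt_max_of_lt_right hs0, max_lt ht1 hs1⟩, ?_⟩
    rintro δ ⟨hδ0, hδ1⟩
    have hts : t < δ := lt_of_le_of_lt (le_max_left _ _) hδ0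
    have hss : s < δ := lt_of_le_of_lt (le_max_right _ _) hδ0
    have hδpos : 0 < δ := lt_trans hs0 hss
    have h1δ : 0 < 1 - δ := by linarith
    have hkey : ((n : ℝ) - 1) * r < (n : ℝ) * (r - 1) * (1 + δ) := by
      rw [ht, sub_lt_iff_lt_add, div_lt_iff₀ hden] at hts
      nlinarith
    have hσδ : σ < δ * ((r - 1) * c) := by
      rw [hs, div_lt_iff₀ hA] at hss
      linarith
    refine ⟨?_, ?_, ?_, ?_⟩
    · rw [ge_iff_le, ← sub_nonneg]
      have h : (r - 1) * c - ((1 - δ) * (((n : ℝ) - 1) * r * c / n)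
          + δ ^ 2 * (r - 1) * c)
          = (1 - δ) * c * ((n : ℝ) * (r - 1) * (1 + δ) - ((n : ℝ) - 1) * r) / n := by
        rw [eq_div_iff hN0.ne', sub_mul, add_mul, mul_assoc (1 - δ),
          div_mul_cancel₀ _ hN0.ne']
        ring
      rw [h]
      exact div_nonneg (by nlinarith [mul_pos (mul_pos h1δ hc) (sub_pos.mpr hkey)]) hN0.le
    · nlinarith
    · have hNne : ((n : ℝ)) ≠ 0 := hN0.ne'
      have h : r * c / n - c = c * (r - (n : ℝ)) / n := by
        rw [eq_div_iff hNne, sub_mul, div_mul_cancel₀ _ hNne]; ring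
      have h2 : r * c / n - c ≤ 0 := by
        rw [h]; exact div_nonpos_of_nonpos_of_nonneg (by nlinarith) hN0.le
      nlinarith [mul_nonpos_of_nonneg_of_nonpos h1δ.le h2]
    · nlinarith
  · intro hlt
    have hlt' : r * ((n : ℝ) + 1) < 2 * (n : ℝ) := by
      rw [lt_div_iff₀ hN1] at hlt
      linarith
    refine ⟨1/2, ⟨by norm_num, by norm_num⟩, ?_⟩
    rintro δ ⟨hδ0, hδ1⟩
    have h1δ : 0 < 1 - δ := by linarith
    have hkey : (n : ℝ) * (r - 1) * (1 + δ) < ((n : ℝ) - 1) * r := by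
      nlinarith
    rw [← sub_pos]
    have h : (1 - δ) * (((n : ℝ) - 1) * r * c / n) + δ ^ 2 * (r - 1) * c
        - (r - 1) * c
        = (1 - δ) * c * (((n : ℝ) - 1) * r - (n : ℝ) * (r - 1) * (1 + δ)) / n := by
      field_simp
      ring
    rw [h]
    exact div_pos (by nlinarith [mul_pos (mul_pos h1δ hc) (sub_pos.mpr hkey)]) hN0
end

section
/- Let n ≥ 2 be an integer and c > 0. If σ is a real number with 0 < σ < (n−1)c/(n+1), then (σ+3c)n/((2n+1)c) < 2n/(n+1). That is, the equilibrium threshold for OD-TFT and DO-OFT is strictly lower than the equilibrium threshold for AoN. -/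
/-- The equilibrium threshold for OD-TFT and DO-OFT is strictly lower than the
threshold for AoN whenever `0 < σ < (n−1)c/(n+1)`. -/
theorem ODTFT_threshold_lt_AoN_threshold (n : ℕ) (hn : 2 ≤ n) (c : ℝ)
    (hc : 0 < c) (σ : ℝ) (hσ0 : 0 < σ)
    (hσ : σ < ((n : ℝ) - 1) * c / ((n : ℝ) + 1)) :
    (σ + 3 * c) * n / ((2 * (n : ℝ) + 1) * c) < 2 * n / ((n : ℝ) + 1) := by
  have hn' : (2 : ℝ) ≤ (n : ℝ) := by exact_mod_cast hn
  have h1 : (0 : ℝ) < (n : ℝ) + 1 := by linarith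
  have h2 : (0 : ℝ) < (2 * (n : ℝ) + 1) * c := by positivity
  rw [div_lt_div_iff₀ h2 h1]
  have hσ' : σ * ((n : ℝ) + 1) < ((n : ℝ) - 1) * c := by
    rw [lt_div_iff₀ h1] at hσ; linarith
  nlinarith [mul_pos hc (show (0:ℝ) < (n:ℝ) by linarith), hσ', mul_pos hσ0 (show (0:ℝ) < (n:ℝ) by linarith)]
end

section
/- Let n ≥ 2 be an integer, c > 0, and r, σ real numbers with 1 < r < n and 0 < σ < (r−1)c. For δ ∈ (0,1) define π0C(δ) = (1−δ)(r−1)c + δσ and π0D(δ) = (1−δ)·((n−1)rc/n + δ²(r−1)c) + δ³σ. If σ > (n−1)rc/(2n), then there exists δ₀ ∈ (0,1) such that for all δ ∈ (δ₀,1): π0C(δ) ≥ π0D(δ). Conversely, if σ < (n−1)rc/(2n), then there exists δ₀ ∈ (0,1) such that for all δ ∈ (δ₀,1): π0C(δ) < π0D(δ). -/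
set_option maxHeartbeats 1000000 in
/-- State-0 no-deviation condition for the opt-out-supporting equilibrium of
Table S2, row 3: for `δ` close enough to 1, sticking to cooperation is at
least as good as a one-shot deviation to defection iff `σ ≥ (n−1)rc/(2n)`
(strict versions). -/
theorem optout_row3_state0 (n : ℕ) (hn : 2 ≤ n) (c r σ : ℝ)
    (hc : 0 < c) (hr1 : 1 < r) (hrn : r < (n : ℝ))
    (hσ0 : 0 < σ) (hσ : σ < (r - 1) * c) :
    (σ > ((n : ℝ) - 1) * r * c / (2 * n) →
      ∃ δ₀ ∈ Set.Ioo (0 : ℝ) 1, ∀ δ ∈ Set.Ioo δ₀ 1,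
        (1 - δ) * (r - 1) * c + δ * σ ≥
          (1 - δ) * (((n : ℝ) - 1) * r * c / n + δ ^ 2 * (r - 1) * c)
            + δ ^ 3 * σ) ∧
    (σ < ((n : ℝ) - 1) * r * c / (2 * n) →
      ∃ δ₀ ∈ Set.Ioo (0 : ℝ) 1, ∀ δ ∈ Set.Ioo δ₀ 1,
        (1 - δ) * (r - 1) * c + δ * σ <
          (1 - δ) * (((n : ℝ) - 1) * r * c / n + δ ^ 2 * (r - 1) * c)
            + δ ^ 3 * σ) := by
  have hn2 : (2:ℝ) ≤ (n:ℝ) := by exact_mod_cast hn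
  have hnpos : (0:ℝ) < (n:ℝ) := by linarith
  set A : ℝ := ((n : ℝ) - 1) * r * c / n with hA
  have hAhalf : ((n : ℝ) - 1) * r * c / (2 * n) = A / 2 := by
    rw [hA]; ring
  set M : ℝ := 2 * (r - 1) * c + 3 * σ with hM
  have hMpos : 0 < M := by nlinarith
  constructor
  · intro h
    rw [hAhalf] at h
    set ε : ℝ := 2 * σ - A with hε
    have hεpos : 0 < ε := by simp only [hε]; linarith
    refine ⟨max (1/2) (1 - ε / M), ⟨?_, ?_⟩, ?_⟩
    · exact lt_max_iff.mpr (Or.inl (by norm_num))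
    · refine max_lt (by norm_num) ?_
      have : 0 < ε / M := div_pos hεpos hMpos
      linarith
    · rintro δ ⟨hδ1, hδ2⟩
      have h12 : (1:ℝ)/2 < δ := lt_of_le_of_lt (le_max_left _ _) hδ1
      have hδε : 1 - ε / M < δ := lt_of_le_of_lt (le_max_right _ _) hδ1
      have hδM : (1 - δ) * M < ε := by
        rw [← lt_div_iff₀ hMpos]; linarith
      -- g(δ) := (r-1)c(1-δ²) + σδ(1+δ) - A
      have hg : ε - (1 - δ) * M ≤ (r-1)*c*(1-δ^2) + σ*δ*(1+δ) - A := by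
        have key : 0 ≤ (1 - δ) * ((r-1)*c*(3+δ) + σ*(1-δ)) := by
          apply mul_nonneg (by linarith)
          have : 0 ≤ (r-1)*c*(3+δ) := by
            apply mul_nonneg (by nlinarith) (by linarith)
          nlinarith
        simp only [hε, hM]; nlinarith
      have hgpos : 0 < (r-1)*c*(1-δ^2) + σ*δ*(1+δ) - A := by linarith
      have hfac : (1 - δ) * (r - 1) * c + δ * σ -
          ((1 - δ) * (A + δ ^ 2 * (r - 1) * c) + δ ^ 3 * σ)
          = (1 - δ) * ((r-1)*c*(1-δ^2) + σ*δ*(1+δ) - A) := by ring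
      have := mul_pos (by linarith : (0:ℝ) < 1 - δ) hgpos
      linarith [this, hfac]
  · intro h
    rw [hAhalf] at h
    set ε : ℝ := A - 2 * σ with hε
    have hεpos : 0 < ε := by simp only [hε]; linarith
    refine ⟨max (1/2) (1 - ε / M), ⟨?_, ?_⟩, ?_⟩
    · exact lt_max_iff.mpr (Or.inl (by norm_num))
    · refine max_lt (by norm_num) ?_
      have : 0 < ε / M := div_pos hεpos hMpos
      linarith
    · rintro δ ⟨hδ1, hδ2⟩
      have h12 : (1:ℝ)/2 < δ := lt_of_le_of_lt (le_max_left _ _) hδ1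
      have hδε : 1 - ε / M < δ := lt_of_le_of_lt (le_max_right _ _) hδ1
      have hδM : (1 - δ) * M < ε := by
        rw [← lt_div_iff₀ hMpos]; linarith
      have hg : (r-1)*c*(1-δ^2) + σ*δ*(1+δ) - A ≤ -ε + (1 - δ) * M := by
        have key : 0 ≤ (1 - δ) * ((r-1)*c*(1-δ) + σ*(5+δ)) := by
          apply mul_nonneg (by linarith)
          have : 0 ≤ (r-1)*c*(1-δ) := by
            apply mul_nonneg (by nlinarith) (by linarith)
          nlinarith
        simp only [hε, hM]; nlinarith
      have hgneg : (r-1)*c*(1-δ^2) + σ*δ*(1+δ) - A < 0 := by linarith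
      have hfac : (1 - δ) * (r - 1) * c + δ * σ -
          ((1 - δ) * (A + δ ^ 2 * (r - 1) * c) + δ ^ 3 * σ)
          = (1 - δ) * ((r-1)*c*(1-δ^2) + σ*δ*(1+δ) - A) := by ring
      have hneg : (1 - δ) * ((r-1)*c*(1-δ^2) + σ*δ*(1+δ) - A) < 0 :=
        mul_neg_of_pos_of_neg (by linarith) hgneg
      linarith [hneg, hfac]
end

section
/- Let n ≥ 2 be an integer, c > 0, and r, σ real numbers with 1 < r < n and 0 < σ < (r−1)c. For δ ∈ (0,1) define π0C(δ) = (1−δ)(r−1)c + δσ, π0D(δ) = (1−δ)·(n−1)rc/n + δ²σ, π1D(δ) = δσ, and π1C(δ) = (1−δ)·((rc/n − c) + δ(r−1)c) + δ²σ. If σ > (n+1)rc/n − 2c and σ > c − rc/n, then there exists δ₀ ∈ (0,1) such that for all δ ∈ (δ₀,1): π0C(δ) ≥ π0D(δ) and π1D(δ) ≥ π1C(δ). Conversely, if σ < (n+1)rc/n − 2c, then π1D(δ) < π1C(δ) for all δ sufficiently close to 1, and if σ < c − rc/n, then π0C(δ) < π0D(δ) for all δ sufficiently close to 1. -/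
/-- No-deviation conditions for the opt-out-supporting equilibrium of Table
S2, row 4: for `δ` close enough to 1, no one-shot deviation (in State 0 or
State 1) is profitable iff `σ ≥ (n+1)rc/n − 2c` and `σ ≥ c − rc/n` (strict
versions). -/
theorem optout_row4_conditions (n : ℕ) (hn : 2 ≤ n) (c r σ : ℝ)
    (hc : 0 < c) (hr1 : 1 < r) (hrn : r < (n : ℝ))
    (hσ0 : 0 < σ) (hσ : σ < (r - 1) * c) :
    (σ > ((n : ℝ) + 1) * r * c / n - 2 * c → σ > c - r * c / n →
      ∃ δ₀ ∈ Set.Ioo (0 : ℝ) 1, ∀ δ ∈ Set.Ioo δ₀ 1,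
        (1 - δ) * (r - 1) * c + δ * σ ≥
          (1 - δ) * (((n : ℝ) - 1) * r * c / n) + δ ^ 2 * σ ∧
        δ * σ ≥ (1 - δ) * ((r * c / n - c) + δ * (r - 1) * c) + δ ^ 2 * σ) ∧
    (σ < ((n : ℝ) + 1) * r * c / n - 2 * c →
      ∃ δ₀ ∈ Set.Ioo (0 : ℝ) 1, ∀ δ ∈ Set.Ioo δ₀ 1,
        δ * σ < (1 - δ) * ((r * c / n - c) + δ * (r - 1) * c) + δ ^ 2 * σ) ∧
    (σ < c - r * c / n →
      ∃ δ₀ ∈ Set.Ioo (0 : ℝ) 1, ∀ δ ∈ Set.Ioo δ₀ 1,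
        (1 - δ) * (r - 1) * c + δ * σ <
          (1 - δ) * (((n : ℝ) - 1) * r * c / n) + δ ^ 2 * σ) := by
  have hm0 : (0:ℝ) < (n:ℝ) := by positivity
  have hmne : (n:ℝ) ≠ 0 := ne_of_gt hm0
  set K : ℝ := r * c / n with hKdef
  have hK0 : 0 < K := by positivity
  have h1 : ((n:ℝ) - 1) * r * c / n = r * c - K := by
    rw [hKdef]; field_simp
  have h2 : ((n:ℝ) + 1) * r * c / n = r * c + K := by
    rw [hKdef]; field_simp
  have hD : 0 < (r - 1) * c - σ := by linarith
  refine ⟨?_, ?_, ?_⟩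
  · intro hB hA
    rw [h2] at hB
    -- f1 := σ + K - c > 0,  g1 := σ + 2c - K - r*c > 0
    have hf1 : 0 < σ + K - c := by linarith
    have hg1 : 0 < σ + 2 * c - K - r * c := by linarith
    refine ⟨max (1/2) (1 - (σ + K - c) / (2 * σ)), ⟨?_, ?_⟩, ?_⟩
    · have : (0:ℝ) < 1/2 := by norm_num
      exact lt_of_lt_of_le this (le_max_left _ _)
    · apply max_lt (by norm_num)
      have : 0 < (σ + K - c) / (2 * σ) := by positivity
      linarith
    · intro δ ⟨hδ0, hδ1⟩
      have hδ2 : 1 - (σ + K - c) / (2 * σ) < δ := lt_of_le_of_lt (le_max_right _ _) hδ0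
      have hδh : (1/2 : ℝ) < δ := lt_of_le_of_lt (le_max_left _ _) hδ0
      have hδpos : 0 < δ := by linarith
      have h1δ : 0 < 1 - δ := by linarith
      have hq : (1 - δ) * (2 * σ) < σ + K - c := by
        have := (lt_div_iff₀ (by positivity : (0:ℝ) < 2 * σ)).mp (by linarith : 1 - δ < (σ + K - c) / (2 * σ))
        linarith
      constructor
      · rw [h1]
        nlinarith [mul_pos h1δ hf1, mul_nonneg h1δ.le hσ0.le]
      · nlinarith [mul_pos h1δ hg1, mul_pos h1δ hD]
  · intro hB
    rw [h2] at hB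
    have hG : 0 < r * c + K - 2 * c - σ := by linarith
    refine ⟨max (1/2) (1 - (r * c + K - 2 * c - σ) / (2 * ((r - 1) * c - σ))), ⟨?_, ?_⟩, ?_⟩
    · have : (0:ℝ) < 1/2 := by norm_num
      exact lt_of_lt_of_le this (le_max_left _ _)
    · apply max_lt (by norm_num)
      have : 0 < (r * c + K - 2 * c - σ) / (2 * ((r - 1) * c - σ)) := by positivity
      linarith
    · intro δ ⟨hδ0, hδ1⟩
      have hδ2 : 1 - (r * c + K - 2 * c - σ) / (2 * ((r - 1) * c - σ)) < δ :=
        lt_of_le_of_lt (le_max_right _ _) hδ0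
      have h1δ : 0 < 1 - δ := by
        have := lt_of_le_of_lt (le_max_left _ _) hδ0; linarith
      have hq : (1 - δ) * (2 * ((r - 1) * c - σ)) < r * c + K - 2 * c - σ := by
        have := (lt_div_iff₀ (by positivity : (0:ℝ) < 2 * ((r - 1) * c - σ))).mp
          (by linarith : 1 - δ < (r * c + K - 2 * c - σ) / (2 * ((r - 1) * c - σ)))
        linarith
      nlinarith [mul_pos h1δ hG, mul_pos h1δ hD]
  · intro hA
    have hf1 : σ + K - c < 0 := by linarith
    refine ⟨1/2, ⟨by norm_num, by norm_num⟩, ?_⟩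
    intro δ ⟨hδ0, hδ1⟩
    have h1δ : 0 < 1 - δ := by linarith
    rw [h1]
    nlinarith [mul_pos h1δ (by linarith : 0 < c - K - σ), mul_pos h1δ (mul_pos h1δ hσ0)]
end

section
/- Let n ≥ 2 be an integer, c > 0, and r, σ real numbers with 1 < r < n and 0 < σ < (r−1)c. For δ ∈ (0,1) define π1D(δ) = (1−δ)δσ + δ²(r−1)c and π1C(δ) = (1−δ)(rc/n − c) + δ(r−1)c. If σ + 2c > (n+1)rc/n (equivalently r < (σ+2c)n/((n+1)c)), then there exists δ₀ ∈ (0,1) such that for all δ ∈ (δ₀,1): π1D(δ) ≥ π1C(δ). Conversely, if σ + 2c < (n+1)rc/n, then there exists δ₀ ∈ (0,1) such that for all δ ∈ (δ₀,1): π1D(δ) < π1C(δ). -/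
/-- State-1 no-deviation condition of Table S1, row 8: for `δ` close enough
to 1, sticking to defection is at least as good as a one-shot deviation to
cooperation iff `σ + 2c ≥ (n+1)rc/n` (strict versions). -/
theorem row8_state1_condition (n : ℕ) (hn : 2 ≤ n) (c r σ : ℝ)
    (hc : 0 < c) (hr1 : 1 < r) (hrn : r < (n : ℝ))
    (hσ0 : 0 < σ) (hσ : σ < (r - 1) * c) :
    (σ + 2 * c > ((n : ℝ) + 1) * r * c / n →
      ∃ δ₀ ∈ Set.Ioo (0 : ℝ) 1, ∀ δ ∈ Set.Ioo δ₀ 1,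
        (1 - δ) * δ * σ + δ ^ 2 * (r - 1) * c ≥
          (1 - δ) * (r * c / n - c) + δ * (r - 1) * c) ∧
    (σ + 2 * c < ((n : ℝ) + 1) * r * c / n →
      ∃ δ₀ ∈ Set.Ioo (0 : ℝ) 1, ∀ δ ∈ Set.Ioo δ₀ 1,
        (1 - δ) * δ * σ + δ ^ 2 * (r - 1) * c <
          (1 - δ) * (r * c / n - c) + δ * (r - 1) * c) := by
  have hn0 : (0 : ℝ) < n := by positivity
  constructor
  · intro h
    refine ⟨1/2, ⟨by norm_num, by norm_num⟩, fun δ ⟨hδl, hδu⟩ => ?_⟩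
    have h1 : σ + 2 * c - ((n : ℝ) + 1) * r * c / n > 0 := by linarith
    have hkey : ((n : ℝ) + 1) * r * c / n * n = ((n : ℝ) + 1) * r * c := by
      field_simp
    have hrcn : r * c / n * n = r * c := by field_simp
    -- g δ = δ(σ-(r-1)c) + c - rc/n ≥ g 1 > 0
    have hg1 : σ - (r - 1) * c + c - r * c / n > 0 := by
      nlinarith [mul_pos h1 hn0]
    have hgδ : δ * (σ - (r - 1) * c) + c - r * c / n > 0 := by
      nlinarith [mul_nonneg (le_of_lt (sub_pos.mpr hδu)) (le_of_lt (sub_pos.mpr hσ))]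
    nlinarith [mul_nonneg (le_of_lt (sub_pos.mpr hδu)) (le_of_lt hgδ)]
  · intro h
    set δ₀ : ℝ := (c - r * c / n) / ((r - 1) * c - σ) with hδ₀
    have hden : 0 < (r - 1) * c - σ := by linarith
    have hnum : 0 < c - r * c / n := by
      rw [sub_pos, div_lt_iff₀ hn0]
      nlinarith
    have hδ₀pos : 0 < δ₀ := div_pos hnum hden
    have hδ₀lt1 : δ₀ < 1 := by
      rw [hδ₀, div_lt_one hden]
      have : ((n : ℝ) + 1) * r * c / n = r * c + r * c / n := by
        field_simp
      nlinarith
    refine ⟨δ₀, ⟨hδ₀pos, hδ₀lt1⟩, fun δ ⟨hδl, hδu⟩ => ?_⟩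
    have hgδ : δ * (σ - (r - 1) * c) + c - r * c / n < 0 := by
      have := (div_lt_iff₀ hden).mp (by rw [← hδ₀]; exact hδl)
      nlinarith
    nlinarith [mul_pos (sub_pos.mpr hδu) (neg_pos.mpr hgδ)]
end
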